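/- arXiv:2506.23312 — 4 statements merged into one kernel-verified Lean document; each statement's English description precedes it below -/
import Mathlib

section
/- (Uhlenbeck) Let a_1,…,a_{n+1} be pairwise distinct reals and for B = (b_1,…,b_{n+1}) ∈ ℝ^{n+1} define F_B = (1/2) ∑_{i<j} ((b_i−b_j)/(a_i−a_j)) M_{ij}^2 + ∑_i b_i (X^i)^2 on T*S^n. Then for any B, B′ ∈ ℝ^{n+1}, the functions F_B and F_{B′} Poisson commute with respect to the canonical Poisson structure on T*S^n. -/
open scoped BigOperators

/-- Ambient coordinates on `T*Sⁿ ⊂ ℝ^{n+1} × ℝ^{n+1}`: pairs `(x, p)`. -/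
abbrev Phase (N : ℕ) := (Fin N → ℝ) × (Fin N → ℝ)

/-- The canonical Poisson bracket in the ambient coordinates `(x, p)`:
`{F,G} = ∑ₖ (∂F/∂pₖ ∂G/∂xₖ - ∂F/∂xₖ ∂G/∂pₖ)`. -/
noncomputable def pb {N : ℕ} (F G : Phase N → ℝ) (z : Phase N) : ℝ :=
  ∑ k, (fderiv ℝ F z ((0 : Fin N → ℝ), Pi.single k 1)
          * fderiv ℝ G z (Pi.single k 1, (0 : Fin N → ℝ))
      - fderiv ℝ F z (Pi.single k 1, (0 : Fin N → ℝ))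
          * fderiv ℝ G z ((0 : Fin N → ℝ), Pi.single k 1))

/-- `T*Sⁿ` realized as the constraint set `{|x| = 1, ⟨x,p⟩ = 0}`. -/
def TS (N : ℕ) : Set (Phase N) := {z | (∑ k, (z.1 k)^2 = 1) ∧ (∑ k, z.1 k * z.2 k = 0)}

/-- Momentum function `M_{ij}` of the rotation `Xⁱ ∂_{Xʲ} - Xʲ ∂_{Xⁱ}`. -/
def Mf {N : ℕ} (i j : Fin N) (z : Phase N) : ℝ := z.1 i * z.2 j - z.1 j * z.2 i

/-- The Uhlenbeck integral
`F_B = (1/2) ∑_{i<j} ((bᵢ-bⱼ)/(aᵢ-aⱼ)) M_{ij}² + ∑ᵢ bᵢ (Xⁱ)²`. -/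
noncomputable def FB {N : ℕ} (a B : Fin N → ℝ) (z : Phase N) : ℝ :=
  (1/2) * ∑ i, ∑ j ∈ Finset.Ioi i, ((B i - B j)/(a i - a j)) * (Mf i j z)^2
    + ∑ i, B i * (z.1 i)^2

/-!
Write `F_B = ¼ ∑_{i,j} cᵢⱼ Mᵢⱼ² + ∑ bᵢ xᵢ²` with the symmetric divided differences
`cᵢⱼ = (bᵢ - bⱼ)/(aᵢ - aⱼ)`, and `c'` for those of `B'`. The bracket `{F_B, F_B'}` is a cubic part `∑ eₖᵢⱼ Mₖᵢ Mₖⱼ xᵢ pⱼ`, with `eₖᵢⱼ = c'ₖᵢ cₖⱼ - cₖᵢ c'ₖⱼ`, plus a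
quadratic part `2 ∑ sₖᵢ xₖ xᵢ Mₖᵢ`. The quadratic part vanishes because
`sₖᵢ = bₖ c'ₖᵢ - b'ₖ cₖᵢ = (bᵢ b'ₖ - bₖ b'ᵢ)/(aₖ - aᵢ)` is symmetric while `xₖ xᵢ Mₖᵢ` is
antisymmetric. Symmetrising the cubic part over the permutations of `(k, i, j)` turns it into the
totally antisymmetric `Mₖᵢ Mₖⱼ Mᵢⱼ` times the cyclic sum `eₖᵢⱼ + eᵢⱼₖ + eⱼₖᵢ`, which vanishes by an
identity of divided differences.
-/

open Finset

lemma Finset.two_nsmul_sum_sum_Ioi_of_symm {α M : Type*} [LinearOrder α] [Fintype α]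
    [LocallyFiniteOrderTop α] [LocallyFiniteOrderBot α] [AddCommMonoid M] {g : α → α → M}
    (hsymm : ∀ i j, g i j = g j i) (hdiag : ∀ i, g i i = 0) :
    2 • ∑ i, ∑ j ∈ Ioi i, g i j = ∑ i, ∑ j, g i j := calc
  2 • ∑ i, ∑ j ∈ Ioi i, g i j = ∑ i, ∑ j ∈ Ioi i, (g j i + g i j) := by
    simp only [two_nsmul, ← sum_add_distrib, hsymm]
  _ = ∑ i, ∑ j ∈ {i}ᶜ, g j i := sum_sum_Ioi_add_eq_sum_sum_off_diag g
  _ = ∑ i, ∑ j, g j i := sum_congr rfl fun i _ => by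
    rw [← sum_compl_add_sum {i}, sum_singleton, hdiag, add_zero]
  _ = ∑ i, ∑ j, g i j := sum_comm

lemma Finset.sum_sum_sum_eq_zero_of_symmetrization {ι M : Type*} [Fintype ι] [AddCommGroup M]
    [IsAddTorsionFree M] (f : ι → ι → ι → M)
    (hf : ∀ k i j, f k i j + f k j i + f i j k + f i k j + f j k i + f j i k = 0) :
    ∑ k, ∑ i, ∑ j, f k i j = 0 := by
  set S := ∑ k, ∑ i, ∑ j, f k i j
  have h₁ : ∑ k, ∑ i, ∑ j, f k j i = S := sum_congr rfl fun _ _ => sum_comm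
  have h₂ : ∑ k, ∑ i, ∑ j, f i k j = S := sum_comm
  have h₃ : ∑ k, ∑ i, ∑ j, f i j k = S := by rw [sum_comm]; exact h₁
  have h₄ : ∑ k, ∑ i, ∑ j, f j k i = S := by rw [sum_congr rfl fun _ _ => sum_comm]; exact h₂
  have h₅ : ∑ k, ∑ i, ∑ j, f j i k = S := by rw [sum_comm]; exact h₄
  have h := sum_eq_zero fun k (_ : k ∈ univ) => sum_eq_zero fun i (_ : i ∈ univ) =>
    sum_eq_zero fun j (_ : j ∈ univ) => hf k i j
  simp only [sum_add_distrib, h₁, h₂, h₃, h₄, h₅] at h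
  have h6 : 6 • S = 0 := by rw [← h]; module
  exact (nsmul_eq_zero_iff_right (by norm_num)).mp h6

lemma Finset.sum_sum_mul_eq_zero_of_symm_of_antisymm {ι R : Type*} [Fintype ι] [Ring R]
    [IsAddTorsionFree R] {s t : ι → ι → R} (hs : ∀ i j, s i j = s j i)
    (ht : ∀ i j, t i j = -t j i) :
    ∑ i, ∑ j, s i j * t i j = 0 :=
  self_eq_neg.mp <| by
    conv_lhs => rw [sum_comm]
    simp only [← sum_neg_distrib]
    refine sum_congr rfl fun i _ => sum_congr rfl fun j _ => ?_
    rw [hs, ht, mul_neg]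

section DivDiff

variable {ι K : Type*} [Field K]

def divDiff (a B : ι → K) (i j : ι) : K := (B i - B j) / (a i - a j)

lemma divDiff_comm (a B : ι → K) (i j : ι) : divDiff a B i j = divDiff a B j i := by
  rw [divDiff, divDiff, ← neg_sub, ← neg_sub (a j), neg_div_neg_eq]

lemma divDiff_cyclic {a : ι → K} (ha : Function.Injective a) (B B' : ι → K) (k i j : ι) :
    (divDiff a B' k i * divDiff a B k j - divDiff a B k i * divDiff a B' k j)
      + (divDiff a B' i j * divDiff a B i k - divDiff a B i j * divDiff a B' i k)
      + (divDiff a B' j k * divDiff a B j i - divDiff a B j k * divDiff a B' j i) = 0 := by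
  rcases eq_or_ne k i with rfl | hki
  · simp only [divDiff]; ring
  rcases eq_or_ne k j with rfl | hkj
  · simp only [divDiff]; ring
  rcases eq_or_ne i j with rfl | hij
  · simp only [divDiff]; ring
  rw [divDiff_comm a B i k, divDiff_comm a B' i k, divDiff_comm a B j k, divDiff_comm a B' j k,
    divDiff_comm a B j i, divDiff_comm a B' j i]
  have := sub_ne_zero.mpr (ha.ne hki)
  have := sub_ne_zero.mpr (ha.ne hkj)
  have := sub_ne_zero.mpr (ha.ne hij)
  simp only [divDiff]
  field_simp
  ring

lemma mul_divDiff_sub_mul_divDiff_comm (a B B' : ι → K) (k i : ι) :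
    B k * divDiff a B' k i - B' k * divDiff a B k i
      = B i * divDiff a B' i k - B' i * divDiff a B i k := by
  rw [divDiff_comm a B' i k, divDiff_comm a B i k, divDiff, divDiff]
  ring

end DivDiff

section UhlenbeckForm

variable {N : ℕ}

lemma Mf_swap (i j : Fin N) (z : Phase N) : Mf j i z = -Mf i j z := by
  simp only [Mf]; ring

lemma Mf_self (i : Fin N) (z : Phase N) : Mf i i z = 0 := sub_self _

noncomputable def uhlenbeckForm (c : Fin N → Fin N → ℝ) (B : Fin N → ℝ) (z : Phase N) : ℝ :=
  (1/4) * ∑ i, ∑ j, c i j * Mf i j z ^ 2 + ∑ i, B i * z.1 i ^ 2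

lemma FB_eq_uhlenbeckForm (a B : Fin N → ℝ) : FB a B = uhlenbeckForm (divDiff a B) B := by
  funext z
  have h := two_nsmul_sum_sum_Ioi_of_symm (g := fun i j => divDiff a B i j * Mf i j z ^ 2)
    (fun i j => by rw [divDiff_comm, Mf_swap, neg_sq]) (fun i => by rw [Mf_self]; ring)
  rw [two_nsmul] at h
  rw [FB, uhlenbeckForm, ← h]
  simp only [divDiff]
  ring

lemma fderiv_uhlenbeckForm_apply (c : Fin N → Fin N → ℝ) (B : Fin N → ℝ) (z v : Phase N) :
    fderiv ℝ (uhlenbeckForm c B) z v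
      = (1/2) * ∑ i, ∑ j, c i j * Mf i j z * (Mf i j (v.1, z.2) + Mf i j (z.1, v.2))
        + 2 * ∑ i, B i * z.1 i * v.1 i := by
  have hx := fun i => (hasFDerivAt_apply (𝕜 := ℝ) i z.1).comp z (hasFDerivAt_fst (p := z))
  have hp := fun i => (hasFDerivAt_apply (𝕜 := ℝ) i z.2).comp z (hasFDerivAt_snd (p := z))
  have hM : ∀ i j, HasFDerivAt (Mf i j) _ z := fun i j =>
    ((hx i).mul (hp j)).sub ((hx j).mul (hp i))
  have hF : HasFDerivAt (uhlenbeckForm c B) _ z :=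
    ((HasFDerivAt.fun_sum fun i _ => HasFDerivAt.fun_sum fun j _ =>
        ((hM i j).pow 2).const_mul (c i j)).const_mul (1/4 : ℝ)).add
      (HasFDerivAt.fun_sum fun i _ => ((hx i).pow 2).const_mul (B i))
  rw [hF.fderiv]
  simp only [one_div, Mf, Nat.add_one_sub_one, pow_one, nsmul_eq_mul, Nat.cast_ofNat,
    Function.comp_apply, add_apply, smul_apply, _root_.sum_apply, sub_apply,
    ContinuousLinearMap.comp_apply, ContinuousLinearMap.coe_snd', ContinuousLinearMap.proj_apply,
    smul_eq_mul, ContinuousLinearMap.coe_fst', mul_sum]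
  congr 1
  · exact sum_congr rfl fun i _ => sum_congr rfl fun j _ => by ring
  · exact sum_congr rfl fun i _ => by ring

lemma sum_sum_mul_Mf_single {g : Fin N → Fin N → ℝ} (hg : ∀ i j, g j i = -g i j) (k : Fin N)
    (u : Fin N → ℝ) : ∑ i, ∑ j, g i j * Mf i j (Pi.single k 1, u) = 2 * ∑ j, g k j * u j := by
  simp only [Mf, Pi.single_apply, ite_mul, one_mul, zero_mul, mul_sub, mul_ite, mul_zero,
    sum_sub_distrib, sum_ite_irrel, sum_const_zero, sum_ite_eq', mem_univ, if_true, hg k, neg_mul,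
    sum_neg_distrib]
  ring

lemma Mf_prod_swap (i j : Fin N) (u w : Fin N → ℝ) : Mf i j (u, w) = -Mf i j (w, u) := by
  simp only [Mf]; ring

lemma mul_Mf_swap_of_symm {c : Fin N → Fin N → ℝ} (hc : ∀ i j, c i j = c j i) (z : Phase N)
    (i j : Fin N) : c j i * Mf j i z = -(c i j * Mf i j z) := by
  rw [hc, Mf_swap, mul_neg]

lemma fderiv_uhlenbeckForm_apply_single_zero {c : Fin N → Fin N → ℝ} (hc : ∀ i j, c i j = c j i)
    (B : Fin N → ℝ) (z : Phase N) (k : Fin N) :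
    fderiv ℝ (uhlenbeckForm c B) z (Pi.single k 1, 0)
      = ∑ j, c k j * Mf k j z * z.2 j + 2 * B k * z.1 k := by
  have hzero : ∀ i j, Mf i j (z.1, (0 : Fin N → ℝ)) = 0 := fun i j => by simp [Mf]
  simp only [fderiv_uhlenbeckForm_apply, hzero, add_zero,
    sum_sum_mul_Mf_single (mul_Mf_swap_of_symm hc z), Pi.single_apply, mul_ite, mul_one, mul_zero,
    sum_ite_eq', mem_univ, if_true]
  ring

lemma fderiv_uhlenbeckForm_apply_zero_single {c : Fin N → Fin N → ℝ} (hc : ∀ i j, c i j = c j i)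
    (B : Fin N → ℝ) (z : Phase N) (k : Fin N) :
    fderiv ℝ (uhlenbeckForm c B) z (0, Pi.single k 1)
      = -∑ j, c k j * Mf k j z * z.1 j := by
  have hzero : ∀ i j, Mf i j ((0 : Fin N → ℝ), z.2) = 0 := fun i j => by simp [Mf]
  simp only [fderiv_uhlenbeckForm_apply, hzero, zero_add, Mf_prod_swap _ _ z.1 (Pi.single k 1),
    mul_neg, sum_neg_distrib, sum_sum_mul_Mf_single (mul_Mf_swap_of_symm hc z), Pi.zero_apply, mul_zero,
    sum_const_zero]
  ring

lemma pb_uhlenbeckForm {c d : Fin N → Fin N → ℝ} (hc : ∀ i j, c i j = c j i)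
    (hd : ∀ i j, d i j = d j i) (B B' : Fin N → ℝ) (z : Phase N) :
    pb (uhlenbeckForm c B) (uhlenbeckForm d B') z
      = ∑ k, ∑ i, ∑ j, (d k i * c k j - c k i * d k j) * Mf k i z * Mf k j z * z.1 i * z.2 j
        + 2 * ∑ k, ∑ i, (B k * d k i - B' k * c k i) * (z.1 k * z.1 i * Mf k i z) := by
  have cubic : ∀ k,
      ∑ i, ∑ j, (d k i * c k j - c k i * d k j) * Mf k i z * Mf k j z * z.1 i * z.2 j = (∑ i, d k i * Mf k i z * z.1 i) * (∑ j, c k j * Mf k j z * z.2 j)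
        - (∑ i, c k i * Mf k i z * z.1 i) * (∑ j, d k j * Mf k j z * z.2 j) := fun k => by
    rw [sum_mul_sum, sum_mul_sum, ← sum_sub_distrib]
    exact sum_congr rfl fun i _ => by
      rw [← sum_sub_distrib]; exact sum_congr rfl fun j _ => by ring
  have quadratic : ∀ k, ∑ i, (B k * d k i - B' k * c k i) * (z.1 k * z.1 i * Mf k i z)
      = z.1 k * (B k * ∑ i, d k i * Mf k i z * z.1 i - B' k * ∑ i, c k i * Mf k i z * z.1 i) :=
    fun k => by
      simp only [mul_sum, ← sum_sub_distrib]; exact sum_congr rfl fun i _ => by ring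
  simp only [pb, fderiv_uhlenbeckForm_apply_single_zero hc,
    fderiv_uhlenbeckForm_apply_zero_single hc, fderiv_uhlenbeckForm_apply_single_zero hd,
    fderiv_uhlenbeckForm_apply_zero_single hd, cubic, quadratic]
  rw [mul_sum, ← sum_add_distrib]
  exact sum_congr rfl fun k _ => by ring

lemma sum_cubic_Mf_eq_zero {e : Fin N → Fin N → Fin N → ℝ} (he : ∀ k i j, e k j i = -e k i j)
    (he_cyclic : ∀ k i j, e k i j + e i j k + e j k i = 0) (z : Phase N) :
    ∑ k, ∑ i, ∑ j, e k i j * Mf k i z * Mf k j z * z.1 i * z.2 j = 0 :=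
  sum_sum_sum_eq_zero_of_symmetrization _ fun k i j => by
    rw [he k i j, he i j k, he j k i]
    linear_combination (norm := (simp only [Mf]; ring1))
      (Mf k i z * Mf k j z * Mf i j z) * he_cyclic k i j

end UhlenbeckForm

/-- **Uhlenbeck.** For pairwise distinct `a₁,…,a_{n+1}` and any
`B, B' ∈ ℝ^{n+1}`, the functions `F_B` and `F_{B'}` Poisson commute on `T*Sⁿ`
with respect to the canonical Poisson structure. -/
theorem uhlenbeck_integrals_commute (n : ℕ) (a : Fin (n+1) → ℝ)
    (ha : Function.Injective a) :
    ∀ B B' : Fin (n+1) → ℝ, ∀ z ∈ TS (n+1), pb (FB a B) (FB a B') z = 0 := by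
  intro B B' z _
  rw [FB_eq_uhlenbeckForm, FB_eq_uhlenbeckForm,
    pb_uhlenbeckForm (divDiff_comm a B) (divDiff_comm a B'),
    sum_cubic_Mf_eq_zero (fun _ _ _ => by ring) (divDiff_cyclic ha B B'),
    sum_sum_mul_eq_zero_of_symm_of_antisymm (mul_divDiff_sub_mul_divDiff_comm a B B')
      (fun k i => by rw [Mf_swap]; ring), mul_zero, add_zero]
end

section
/- With a_i pairwise distinct and F_B as in the Uhlenbeck construction, the map B ↦ F_B from ℝ^{n+1} to functions on T*S^n is linear and injective; F_{(1,…,1)} is the constant function 1 on T*S^n. -/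
open scoped BigOperators

/-- With `aᵢ` pairwise distinct, the map `B ↦ F_B` from `ℝ^{n+1}` to
functions on `T*Sⁿ` is linear and injective; `F_{(1,…,1)}` is the constant function `1`
on `T*Sⁿ`. -/
theorem FB_linear_injective (n : ℕ) (a : Fin (n+1) → ℝ)
    (ha : Function.Injective a) :
    -- linearity
    (∀ B B' : Fin (n+1) → ℝ, ∀ z, FB a (B + B') z = FB a B z + FB a B' z) ∧
    (∀ (c : ℝ) (B : Fin (n+1) → ℝ) (z), FB a (c • B) z = c * FB a B z) ∧
    -- injectivity, as functions on `T*Sⁿ`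
    (∀ B B' : Fin (n+1) → ℝ, (∀ z ∈ TS (n+1), FB a B z = FB a B' z) → B = B') ∧
    -- `F_{(1,…,1)} = 1` on `T*Sⁿ`
    (∀ z ∈ TS (n+1), FB a (fun _ => (1:ℝ)) z = 1) := by
  have hFval : ∀ (B : Fin (n+1) → ℝ) (i : Fin (n+1)),
      FB a B ((Pi.single i 1 : Fin (n+1) → ℝ), (0 : Fin (n+1) → ℝ)) = B i := by
    intro B i
    simp [FB, Mf, Pi.single_apply]
  have hTS : ∀ i : Fin (n+1),
      ((Pi.single i 1 : Fin (n+1) → ℝ), (0 : Fin (n+1) → ℝ)) ∈ TS (n+1) := by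
    intro i
    constructor
    · simp [Pi.single_apply]
    · simp
  refine ⟨?_, ?_, ?_, ?_⟩
  · intro B B' z
    simp only [FB, Pi.add_apply, add_sub_add_comm, add_div, add_mul,
      Finset.sum_add_distrib, mul_add]
    ring
  · intro c B z
    simp only [FB, Pi.smul_apply, smul_eq_mul, ← mul_sub, mul_div_assoc, mul_assoc,
      ← Finset.mul_sum]
    ring
  · intro B B' h
    funext i
    have := h _ (hTS i)
    rwa [hFval, hFval] at this
  · rintro z ⟨hz1, _⟩
    simp [FB, hz1]
end

section
/- With a_i pairwise distinct, the Uhlenbeck integrals F_{B_1},…,F_{B_n} are functionally independent on T*S^n (their differentials are linearly independent on an open dense set) if and only if the vectors B_1,…,B_n ∈ ℝ^{n+1} are linearly independent and (1,1,…,1) ∉ Span(B_1,…,B_n). -/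
open scoped BigOperators

/-- A vector `w` is tangent to the constraint set `T*Sⁿ = {|x|²=1, ⟨x,p⟩=0}` at `z`. -/
def TangentTS {N : ℕ} (z w : Phase N) : Prop :=
  (∑ k, z.1 k * w.1 k = 0) ∧ (∑ k, (w.1 k * z.2 k + z.1 k * w.2 k) = 0)

/-- The differentials of the functions `F k` (restricted to the tangent space of
`T*Sⁿ` at `z`) are linearly independent. -/
def IndepAt {N m : ℕ} (F : Fin m → (Phase N → ℝ)) (z : Phase N) : Prop :=
  ∀ c : Fin m → ℝ,
    (∀ w : Phase N, TangentTS z w → ∑ k, c k * fderiv ℝ (F k) z w = 0) → c = 0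

/-!
A relation `λ • 1 + ∑ cₖ • Bₖ = 0` makes `∑ cₖ F_{Bₖ} = -λ |x|²` (as `F_B` is linear in `B`),
whose differential vanishes on `T*Sⁿ`; so independence at a single point of `T*Sⁿ` forces the
condition on the `Bₖ`.

Conversely, by Lagrange multipliers the differentials are independent on `T*Sⁿ` at `z` as soon
as they stay independent after adjoining the differentials of the two constraints. At `(x, 0)`
only the potential `∑ bᵢ xᵢ²` contributes, and when all `xᵢ ≠ 0` the condition gives exactly
this enlarged independence. Along the ray `(x, s p)` the matrix of these differentials depends
polynomially on `s`, so its Gram determinant is a polynomial in `s`, nonzero at `s = 0`: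
independence holds for all but finitely many `s`, in particular for `s` arbitrarily close to `1`.
Finally, points of `T*Sⁿ` with all `xᵢ ≠ 0` are dense.
-/

open Finset Polynomial
open scoped Matrix

theorem Matrix.det_transpose_mul_self_eq_zero_iff {m k K : Type*} [Fintype m] [Fintype k]
    [DecidableEq k] [Field K] [LinearOrder K] [IsStrictOrderedRing K] (A : Matrix m k K) :
    (Aᵀ * A).det = 0 ↔ ∃ v ≠ 0, A *ᵥ v = 0 := by
  rw [← Matrix.exists_mulVec_eq_zero_iff]
  simp only [← LinearMap.mem_ker (f := Matrix.mulVecLin _), ← Matrix.mulVecLin_apply,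
    Matrix.ker_mulVecLin_transpose_mul_self]

theorem finite_setOf_exists_mulVec_eq_zero_of_polynomial {m k K : Type*} [Fintype m]
    [Fintype k] [DecidableEq k] [Field K] [LinearOrder K] [IsStrictOrderedRing K]
    {M : K → Matrix m k K}
    (hM : ∀ r c, ∃ q : K[X], ∀ s, q.eval s = M s r c) {s₀ : K}
    (h₀ : ∀ v, M s₀ *ᵥ v = 0 → v = 0) :
    {s | ∃ v ≠ 0, M s *ᵥ v = 0}.Finite := by
  choose q hq using hM
  have hdet (s : K) : ((Matrix.of q)ᵀ * Matrix.of q).det.eval s = ((M s)ᵀ * M s).det := by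
    have hP : (Matrix.of q).map (evalRingHom s) = M s := by ext r c; exact hq r c s
    rw [← hP, ← Matrix.transpose_map, ← Matrix.map_mul]
    exact RingHom.map_det (evalRingHom s) _
  have hne : ((Matrix.of q)ᵀ * Matrix.of q).det ≠ 0 := fun h => by
    obtain ⟨v, hv, hMv⟩ := (Matrix.det_transpose_mul_self_eq_zero_iff (M s₀)).mp
      (by rw [← hdet, h, eval_zero])
    exact hv (h₀ v hMv)
  refine (finite_setOfPred_isRoot hne).subset fun s ⟨v, hv, hMv⟩ => ?_
  rw [Set.mem_ofPred_eq, IsRoot, hdet]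
  exact (Matrix.det_transpose_mul_self_eq_zero_iff _).mpr ⟨v, hv, hMv⟩

theorem mem_closure_image_compl_of_finite {X : Type*} [TopologicalSpace X] {f : ℝ → X}
    {t₀ : ℝ} (hf : ContinuousAt f t₀) {S : Set ℝ} (hS : S.Finite) :
    f t₀ ∈ closure (f '' Sᶜ) :=
  mem_closure_image hf ((hS.countable.dense_compl ℝ).closure_eq ▸ Set.mem_univ t₀)

theorem dotProduct_self_pos {ι R : Type*} [Fintype ι] [Ring R] [LinearOrder R]
    [IsStrictOrderedRing R] {v : ι → R} (hv : v ≠ 0) : 0 < v ⬝ᵥ v :=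
  (sum_nonneg fun i _ => mul_self_nonneg (v i)).lt_of_ne
    (Ne.symm (dotProduct_self_eq_zero.not.mpr hv))

def formMatrix {R E ι κ : Type*} [CommSemiring R] [AddCommMonoid E] [Module R E]
    (e : ι → E) (f : κ → Module.Dual R E) : Matrix ι κ R :=
  Matrix.of fun r c => f c (e r)

theorem formMatrix_mulVec {R E ι κ : Type*} [CommSemiring R] [AddCommMonoid E] [Module R E]
    [Fintype κ] (e : ι → E) (f : κ → Module.Dual R E) (v : κ → R) (r : ι) :
    (formMatrix e f *ᵥ v) r = (∑ c, v c • f c) (e r) := by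
  simp [formMatrix, Matrix.mulVec, dotProduct, mul_comm]

section

variable {N n : ℕ}

theorem differentiableAt_FB (a b : Fin N → ℝ) (z : Phase N) :
    DifferentiableAt ℝ (FB a b) z := by
  unfold FB Mf
  fun_prop

theorem fderiv_FB_apply (a b : Fin N → ℝ) (z w : Phase N) :
    fderiv ℝ (FB a b) z w =
      ∑ i, ∑ j ∈ Ioi i, (b i - b j) / (a i - a j) * Mf i j z *
          (Mf i j (z.1, w.2) + Mf i j (w.1, z.2))
        + 2 * ∑ i, b i * z.1 i * w.1 i := by
  have hx := hasFDerivAt_pi'.mp (hasFDerivAt_fst (𝕜 := ℝ) (p := z))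
  have hp := hasFDerivAt_pi'.mp (hasFDerivAt_snd (𝕜 := ℝ) (p := z))
  have hM (i j : Fin N) := ((hx i).mul (hp j)).sub ((hx j).mul (hp i))
  have hF : HasFDerivAt (FB a b) _ z :=
    ((HasFDerivAt.fun_sum fun i _ => HasFDerivAt.fun_sum fun j _ =>
      ((hM i j).pow 2).const_mul ((b i - b j) / (a i - a j))).const_mul (1 / 2)).add
      (HasFDerivAt.fun_sum fun i _ => ((hx i).pow 2).const_mul (b i))
  rw [hF.fderiv]
  simp only [one_div, Pi.sub_apply, Pi.mul_apply, Nat.add_one_sub_one, pow_one, nsmul_eq_mul,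
    Nat.cast_ofNat, add_apply, smul_apply, _root_.sum_apply, sub_apply,
    ContinuousLinearMap.comp_apply, ContinuousLinearMap.coe_snd',
    ContinuousLinearMap.proj_apply, smul_eq_mul, ContinuousLinearMap.coe_fst', mul_sum, Mf]
  congr 1 <;> refine sum_congr rfl fun i _ => ?_
  · exact sum_congr rfl fun j _ => by ring
  · ring

theorem fderiv_FB_apply_of_snd_eq_zero (a b x : Fin N → ℝ) (w : Phase N) :
    fderiv ℝ (FB a b) (x, 0) w = 2 * ∑ i, b i * x i * w.1 i := by
  simp [fderiv_FB_apply, Mf]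

theorem fderiv_FB_smul_one_apply (a : Fin N → ℝ) (c : ℝ) (z w : Phase N) :
    fderiv ℝ (FB a (c • 1)) z w = 2 * c * ∑ i, z.1 i * w.1 i := by
  simp [fderiv_FB_apply, mul_sum, mul_assoc]

theorem FB_sum_smul {ι : Type*} [Fintype ι] (a : Fin N → ℝ) (c : ι → ℝ)
    (B : ι → Fin N → ℝ) :
    FB a (∑ k, c k • B k) = ∑ k, c k • FB a (B k) := by
  ext z
  simp only [FB, Finset.sum_apply, Pi.smul_apply, smul_eq_mul, ← sum_sub_distrib, ← mul_sub,
    sum_div, sum_mul, mul_sum, mul_add, sum_add_distrib]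
  congr 1
  · rw [sum_comm]
    refine sum_congr rfl fun i _ => ?_
    rw [sum_comm]
    exact sum_congr rfl fun j _ => sum_congr rfl fun k _ => by ring
  · rw [sum_comm]
    exact sum_congr rfl fun i _ => sum_congr rfl fun k _ => by ring

theorem sum_mul_fderiv_FB {ι : Type*} [Fintype ι] (a : Fin N → ℝ) (c : ι → ℝ)
    (B : ι → Fin N → ℝ) (z w : Phase N) :
    ∑ k, c k * fderiv ℝ (FB a (B k)) z w = fderiv ℝ (FB a (∑ k, c k • B k)) z w := by
  rw [FB_sum_smul, fderiv_sum fun k _ => (differentiableAt_FB a (B k) z).const_smul (c k)]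
  simp [fderiv_const_smul (differentiableAt_FB _ _ _)]

theorem exists_polynomial_eval_eq_fderiv_FB (a b x p : Fin N → ℝ) (w : Phase N) :
    ∃ q : ℝ[X], ∀ s, q.eval s = fderiv ℝ (FB a b) (x, s • p) w := by
  refine ⟨C (∑ i, ∑ j ∈ Ioi i, (b i - b j) / (a i - a j) * Mf i j (x, p) * Mf i j (x, w.2))
        * X
      + C (∑ i, ∑ j ∈ Ioi i, (b i - b j) / (a i - a j) * Mf i j (x, p) * Mf i j (w.1, p))
        * X ^ 2
      + C (2 * ∑ i, b i * x i * w.1 i), fun s => ?_⟩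
  rw [fderiv_FB_apply]
  simp only [eval_add, eval_mul, eval_C, eval_X, eval_pow]
  congr 1
  simp only [sum_mul, ← sum_add_distrib]
  refine sum_congr rfl fun i _ => sum_congr rfl fun j _ => ?_
  simp only [Mf, Pi.smul_apply, smul_eq_mul]
  ring

/-- `½ d|x|²` and `d⟨x, p⟩` at `z`. -/
def constraintForm (z : Phase N) : Fin 2 → Module.Dual ℝ (Phase N) :=
  ![dotProductBilin ℝ ℝ z.1 ∘ₗ LinearMap.fst ℝ (Fin N → ℝ) (Fin N → ℝ),
    dotProductBilin ℝ ℝ z.2 ∘ₗ LinearMap.fst ℝ (Fin N → ℝ) (Fin N → ℝ)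
      + dotProductBilin ℝ ℝ z.1 ∘ₗ LinearMap.snd ℝ (Fin N → ℝ) (Fin N → ℝ)]

theorem tangentTS_iff (z w : Phase N) : TangentTS z w ↔ ∀ j, constraintForm z j w = 0 := by
  simp [TangentTS, constraintForm, Fin.forall_fin_two, dotProduct, sum_add_distrib, mul_comm]

theorem exists_sum_smul_constraintForm_eq {z : Phase N} {L : Module.Dual ℝ (Phase N)}
    (h : ∀ w, TangentTS z w → L w = 0) :
    ∃ μ : Fin 2 → ℝ, ∑ j, μ j • constraintForm z j = L :=
  (Submodule.mem_span_range_iff_exists_fun ℝ).mp <| mem_span_of_iInf_ker_le_ker fun w hw =>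
    h w <| (tangentTS_iff z w).mpr <| by simpa [Submodule.mem_iInf] using hw

noncomputable def phaseBasis (N : ℕ) : Module.Basis (Fin N ⊕ Fin N) ℝ (Phase N) :=
  (Pi.basisFun ℝ (Fin N)).prod (Pi.basisFun ℝ (Fin N))

/-- A nonzero kernel vector `(c, μ)` is a relation
`∑ cₖ dF_{Bₖ} + ∑ μⱼ constraintForm z j = 0` among the differentials at `z`. -/
noncomputable def derivMatrix (a : Fin N → ℝ) (B : Fin n → Fin N → ℝ) (z : Phase N) :
    Matrix (Fin N ⊕ Fin N) (Fin n ⊕ Fin 2) ℝ :=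
  formMatrix (phaseBasis N)
    (Sum.elim (fun k => (fderiv ℝ (FB a (B k)) z : Phase N →ₗ[ℝ] ℝ)) (constraintForm z))

theorem indepAt_of_derivMatrix_injective {a : Fin N → ℝ} {B : Fin n → Fin N → ℝ}
    {z : Phase N} (h : ∀ v, derivMatrix a B z *ᵥ v = 0 → v = 0) :
    IndepAt (fun k => FB a (B k)) z := by
  intro c hc
  obtain ⟨μ, hμ⟩ := exists_sum_smul_constraintForm_eq
    (L := ∑ k, c k • (fderiv ℝ (FB a (B k)) z : Phase N →ₗ[ℝ] ℝ)) fun w hw => by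
      simpa using hc w hw
  have hv := h (Sum.elim c fun j => -μ j) <| funext fun r => by
    rw [derivMatrix, formMatrix_mulVec, Fintype.sum_sum_type]
    simp only [Sum.elim_inl, Sum.elim_inr]
    rw [sum_congr rfl fun j _ => neg_smul (μ j) (constraintForm z j), sum_neg_distrib, hμ,
      add_neg_cancel, LinearMap.zero_apply, Pi.zero_apply]
  exact funext fun k => congrFun hv (Sum.inl k)

theorem derivMatrix_mk_zero_injective {a x : Fin N → ℝ} {B : Fin n → Fin N → ℝ}
    (hB : LinearIndependent ℝ
      (fun o => Option.casesOn' o 1 B : Option (Fin n) → Fin N → ℝ))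
    (hx : ∀ i, x i ≠ 0) (v : Fin n ⊕ Fin 2 → ℝ) (hv : derivMatrix a B (x, 0) *ᵥ v = 0) :
    v = 0 := by
  have hrow₁ (m : Fin N) :
      ∑ k, v (Sum.inl k) * (2 * (B k m * x m)) + v (Sum.inr 0) * x m = 0 := by
    simpa [derivMatrix, formMatrix_mulVec, Fintype.sum_sum_type, phaseBasis, constraintForm,
      fderiv_FB_apply_of_snd_eq_zero, Pi.single_apply] using congrFun hv (Sum.inl m)
  have hrow₂ (m : Fin N) : v (Sum.inr 1) * x m = 0 := by
    simpa [derivMatrix, formMatrix_mulVec, Fintype.sum_sum_type, phaseBasis, constraintForm,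
      fderiv_FB_apply_of_snd_eq_zero] using congrFun hv (Sum.inr m)
  -- as all `xₘ ≠ 0`, the rows `hrow₁` say `(v₀ / 2) • 1 + ∑ vₖ • Bₖ = 0`
  have hrel := Fintype.linearIndependent_iff.mp hB
    (fun o => o.casesOn' (v (Sum.inr 0) / 2) fun k => v (Sum.inl k)) <| funext fun m => by
      have e : ∑ k, v (Sum.inl k) * (2 * (B k m * x m)) =
          2 * x m * ∑ k, v (Sum.inl k) * B k m := by
        rw [mul_sum]
        exact sum_congr rfl fun k _ => by ring
      refine (mul_eq_zero.mp ?_).resolve_left (hx m)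
      simp only [Fintype.sum_option, Option.casesOn'_none, Option.casesOn'_some,
        Pi.smul_apply, Finset.sum_apply, Pi.one_apply, smul_eq_mul]
      linear_combination (1 / 2 : ℝ) * (hrow₁ m - e)
  obtain ⟨m, -⟩ := Function.ne_iff.mp (hB.ne_zero none)
  funext r
  rcases r with k | j
  · exact hrel (some k)
  · fin_cases j
    · simpa using hrel none
    · exact (mul_eq_zero.mp (hrow₂ m)).resolve_right (hx m)

theorem exists_polynomial_eval_eq_derivMatrix (a : Fin N → ℝ) (B : Fin n → Fin N → ℝ)
    (x p : Fin N → ℝ) (r : Fin N ⊕ Fin N) (c : Fin n ⊕ Fin 2) :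
    ∃ q : ℝ[X], ∀ s, q.eval s = derivMatrix a B (x, s • p) r c := by
  rcases c with k | j
  · exact exists_polynomial_eval_eq_fderiv_FB a (B k) x p _
  · fin_cases j
    · exact ⟨C (x ⬝ᵥ (phaseBasis N r).1), fun s => by
        simp [derivMatrix, formMatrix, constraintForm]⟩
    · exact ⟨C (p ⬝ᵥ (phaseBasis N r).1) * X + C (x ⬝ᵥ (phaseBasis N r).2), fun s => by
        simp [derivMatrix, formMatrix, constraintForm, mul_comm s]⟩

theorem finite_setOf_not_indepAt {a x : Fin N → ℝ} {B : Fin n → Fin N → ℝ}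
    (hB : LinearIndependent ℝ
      (fun o => Option.casesOn' o 1 B : Option (Fin n) → Fin N → ℝ))
    (hx : ∀ i, x i ≠ 0) (p : Fin N → ℝ) :
    {s : ℝ | ¬ IndepAt (fun k => FB a (B k)) (x, s • p)}.Finite := by
  refine (finite_setOf_exists_mulVec_eq_zero_of_polynomial
    (exists_polynomial_eval_eq_derivMatrix a B x p) (s₀ := 0)
    (by simpa using derivMatrix_mk_zero_injective hB hx)).subset fun s hs => ?_
  by_contra h
  exact hs (indepAt_of_derivMatrix_injective fun v hv => by_contra fun hv0 => h ⟨v, hv0, hv⟩)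

theorem mem_TS_iff {z : Phase N} : z ∈ TS N ↔ z.1 ⬝ᵥ z.1 = 1 ∧ z.1 ⬝ᵥ z.2 = 0 := by
  simp [TS, dotProduct, sq]

theorem fst_ne_zero_of_mem_TS {z : Phase N} (hz : z ∈ TS N) : z.1 ≠ 0 := fun h => by
  simp [mem_TS_iff, h] at hz

theorem mk_smul_mem_TS {x p : Fin N → ℝ} (hz : (x, p) ∈ TS N) (s : ℝ) :
    (x, s • p) ∈ TS N := by
  rw [mem_TS_iff] at hz ⊢
  simp [hz]

theorem TS_succ_nonempty : (TS (N + 1)).Nonempty :=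
  ⟨(Pi.single 0 1, 0), by simp [mem_TS_iff]⟩

noncomputable def unitVec (x : Fin N → ℝ) : Fin N → ℝ := (√(x ⬝ᵥ x))⁻¹ • x

theorem unitVec_dotProduct_self {x : Fin N → ℝ} (hx : x ≠ 0) :
    unitVec x ⬝ᵥ unitVec x = 1 := by
  have h := dotProduct_self_pos hx
  rw [unitVec, smul_dotProduct, dotProduct_smul, smul_eq_mul, smul_eq_mul, ← mul_assoc,
    ← mul_inv, Real.mul_self_sqrt h.le, inv_mul_cancel₀ h.ne']

theorem unitVec_eq_self {x : Fin N → ℝ} (hx : x ⬝ᵥ x = 1) : unitVec x = x := by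
  simp [unitVec, hx]

theorem unitVec_apply_ne_zero {x : Fin N → ℝ} {i : Fin N} (hi : x i ≠ 0) :
    unitVec x i ≠ 0 := by
  have h := Real.sqrt_pos.mpr (dotProduct_self_pos (Function.ne_iff.mpr ⟨i, hi⟩))
  simp [unitVec, hi, h.ne']

theorem continuousAt_unitVec {x : Fin N → ℝ} (hx : x ≠ 0) : ContinuousAt unitVec x := by
  have h : √(x ⬝ᵥ x) ≠ 0 := (Real.sqrt_pos.mpr (dotProduct_self_pos hx)).ne'
  unfold unitVec
  fun_prop (disch := exact h)

noncomputable def retractTS (z : Phase N) : Phase N :=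
  (unitVec z.1, z.2 - (unitVec z.1 ⬝ᵥ z.2) • unitVec z.1)

theorem retractTS_mem {z : Phase N} (hz : z.1 ≠ 0) : retractTS z ∈ TS N := by
  have h := unitVec_dotProduct_self hz
  rw [mem_TS_iff, retractTS]
  refine ⟨h, ?_⟩
  rw [dotProduct_sub, dotProduct_smul, h, smul_eq_mul, mul_one, sub_self]

theorem retractTS_eq_self {z : Phase N} (hz : z ∈ TS N) : retractTS z = z := by
  rw [mem_TS_iff] at hz
  simp [retractTS, unitVec_eq_self hz.1, hz.2]

theorem continuousAt_retractTS {z : Phase N} (hz : z.1 ≠ 0) : ContinuousAt retractTS z := by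
  have h := (continuousAt_unitVec hz).comp continuousAt_fst
  unfold retractTS
  fun_prop

theorem TS_subset_closure_fst_ne_zero : TS N ⊆ closure {z ∈ TS N | ∀ i, z.1 i ≠ 0} := by
  rintro ⟨x, p⟩ hz
  have hx : x ≠ 0 := fst_ne_zero_of_mem_TS hz
  obtain ⟨m, -⟩ := Function.ne_iff.mp hx
  have hf : ContinuousAt (fun t : ℝ => retractTS (x + t • 1, p)) 0 :=
    ContinuousAt.comp_of_eq (continuousAt_retractTS (z := (x, p)) hx) (by fun_prop) (by simp)
  have hmem := mem_closure_image_compl_of_finite hf (Set.finite_range fun i => -x i)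
  rw [zero_smul, add_zero, retractTS_eq_self hz] at hmem
  refine closure_mono ?_ hmem
  rintro _ ⟨t, ht, rfl⟩
  have hxt (i : Fin N) : (x + t • 1) i ≠ 0 := fun h => ht ⟨i, by simp at h; linarith⟩
  exact ⟨retractTS_mem (Function.ne_iff.mpr ⟨m, hxt m⟩),
    fun i => unitVec_apply_ne_zero (hxt i)⟩

theorem fst_ne_zero_subset_closure_indepAt {a : Fin N → ℝ} {B : Fin n → Fin N → ℝ}
    (hB : LinearIndependent ℝ
      (fun o => Option.casesOn' o 1 B : Option (Fin n) → Fin N → ℝ)) :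
    {z ∈ TS N | ∀ i, z.1 i ≠ 0} ⊆
      closure {z | z ∈ TS N ∧ IndepAt (fun k => FB a (B k)) z} := by
  rintro ⟨x, p⟩ ⟨hz, hx⟩
  have hf : ContinuousAt (fun s : ℝ => ((x, s • p) : Phase N)) 1 := by fun_prop
  have hmem :=
    mem_closure_image_compl_of_finite hf (finite_setOf_not_indepAt (a := a) hB hx p)
  rw [one_smul] at hmem
  refine closure_mono ?_ hmem
  rintro _ ⟨s, hs, rfl⟩
  exact ⟨mk_smul_mem_TS hz s, not_not.mp hs⟩

theorem linearIndependent_option_of_indepAt {a : Fin N → ℝ} {B : Fin n → Fin N → ℝ}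
    {z : Phase N} (hz : z ∈ TS N) (h : IndepAt (fun k => FB a (B k)) z) :
    LinearIndependent ℝ (fun o => Option.casesOn' o 1 B : Option (Fin n) → Fin N → ℝ) := by
  rw [Fintype.linearIndependent_iff]
  intro g hg
  rw [Fintype.sum_option, Option.casesOn'_none, add_eq_zero_iff_eq_neg', ← neg_smul] at hg
  simp only [Option.casesOn'_some] at hg
  have hc : (fun k => g (some k)) = 0 := h _ fun w hw => by
    rw [sum_mul_fderiv_FB, hg, fderiv_FB_smul_one_apply]
    simp [hw.1]
  obtain ⟨m, -⟩ := Function.ne_iff.mp (fst_ne_zero_of_mem_TS hz)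
  have hnone : g none = 0 := by
    simpa [congrFun hc] using congrFun hg m
  rintro (_ | k)
  · exact hnone
  · exact congrFun hc k

end

theorem uhlenbeck_functional_independence_general (n : ℕ) (a : Fin (n+1) → ℝ)
    (B : Fin n → (Fin (n+1) → ℝ)) :
    (∀ z ∈ TS (n+1), z ∈ closure {z' | z' ∈ TS (n+1) ∧ IndepAt (fun k => FB a (B k)) z'})
    ↔ (LinearIndependent ℝ B ∧
        (fun _ => (1:ℝ)) ∉ Submodule.span ℝ (Set.range B)) := by
  rw [← linearIndependent_option']
  constructor
  · intro hdense
    obtain ⟨z₀, hz₀⟩ := TS_succ_nonempty (N := n)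
    obtain ⟨z, hz, hind⟩ := closure_nonempty_iff.mp ⟨z₀, hdense z₀ hz₀⟩
    exact linearIndependent_option_of_indepAt hz hind
  · intro hB z hz
    exact closure_minimal (fst_ne_zero_subset_closure_indepAt hB) isClosed_closure
      (TS_subset_closure_fst_ne_zero hz)

/-- With `aᵢ` pairwise distinct, the Uhlenbeck integrals
`F_{B₁},…,F_{Bₙ}` are functionally independent on `T*Sⁿ` (their differentials are
linearly independent on a dense subset of `T*Sⁿ`) if and only if `B₁,…,Bₙ ∈ ℝ^{n+1}`
are linearly independent and `(1,…,1) ∉ Span(B₁,…,Bₙ)`. -/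
theorem uhlenbeck_functional_independence (n : ℕ) (a : Fin (n+1) → ℝ)
    (ha : Function.Injective a) (B : Fin n → (Fin (n+1) → ℝ)) :
    (∀ z ∈ TS (n+1), z ∈ closure {z' | z' ∈ TS (n+1) ∧ IndepAt (fun k => FB a (B k)) z'})
    ↔ (LinearIndependent ℝ B ∧
        (fun _ => (1:ℝ)) ∉ Submodule.span ℝ (Set.range B)) :=
  uhlenbeck_functional_independence_general n a B
end

section
/- The perturbed Hamiltonian of the magnetic geodesic flow on S^n with magnetic form the restriction of ∑ α_i dX^{2i−1} ∧ dX^{2i} equals H + (1/2)(α_1 M_{12} + α_2 M_{34} + … + α_m M_{2m−1,2m}), where H = K + U_A is the Hamiltonian of the degenerate Neumann system with potential U_A = (1/8) ∑_{i=1}^m α_i^2 ((X^{2i−1})^2 + (X^{2i})^2). -/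
open scoped BigOperators

/-- Index of `X^{2i-1}` (0-based: `2i`). -/
def pIdx (n : ℕ) (i : Fin ((n+1)/2)) : Fin (n+1) := ⟨2 * i.val, by have := i.isLt; omega⟩

/-- Index of `X^{2i}` (0-based: `2i+1`). -/
def qIdx (n : ℕ) (i : Fin ((n+1)/2)) : Fin (n+1) := ⟨2 * i.val + 1, by have := i.isLt; omega⟩

noncomputable def fAux (n : ℕ) (α : Fin ((n+1)/2) → ℝ) (x : Fin (n+1) → ℝ)
    (i : Fin ((n+1)/2)) (k : Fin (n+1)) : ℝ :=
  (α i / 2) * ((if k = qIdx n i then x (pIdx n i) else 0)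
    - (if k = pIdx n i then x (qIdx n i) else 0))

lemma pIdx_ne_qIdx (n : ℕ) (i j : Fin ((n+1)/2)) : pIdx n i ≠ qIdx n j := by
  simp only [pIdx, qIdx, ne_eq, Fin.mk.injEq]
  omega

lemma qIdx_inj (n : ℕ) {i j : Fin ((n+1)/2)} (h : qIdx n i = qIdx n j) : i = j := by
  simp only [qIdx, Fin.mk.injEq] at h
  exact Fin.ext (by omega)

lemma pIdx_inj (n : ℕ) {i j : Fin ((n+1)/2)} (h : pIdx n i = pIdx n j) : i = j := by
  simp only [pIdx, Fin.mk.injEq] at h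
  exact Fin.ext (by omega)

lemma fAux_mul_eq_zero (n : ℕ) (α : Fin ((n+1)/2) → ℝ) (x : Fin (n+1) → ℝ)
    {i j : Fin ((n+1)/2)} (hij : j ≠ i) (k : Fin (n+1)) :
    fAux n α x i k * fAux n α x j k = 0 := by
  simp only [fAux]
  split_ifs <;>
    first
    | ring1
    | (exfalso; simp only [pIdx, qIdx, ne_eq, Fin.ext_iff, Fin.val_mk] at *; omega)

lemma sum_fAux_sq (n : ℕ) (α : Fin ((n+1)/2) → ℝ) (x : Fin (n+1) → ℝ) (k : Fin (n+1)) :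
    (∑ i, fAux n α x i k)^2 = ∑ i, (fAux n α x i k)^2 := by
  rw [sq, Finset.sum_mul_sum]
  refine Finset.sum_congr rfl fun i _ => ?_
  rw [Finset.sum_eq_single i (fun j _ hji => fAux_mul_eq_zero n α x hji k)
    (fun h => absurd (Finset.mem_univ i) h), sq]

lemma sum_k_fAux_sq (n : ℕ) (α : Fin ((n+1)/2) → ℝ) (x : Fin (n+1) → ℝ) (i : Fin ((n+1)/2)) :
    ∑ k, (fAux n α x i k)^2 = (α i / 2)^2 * ((x (pIdx n i))^2 + (x (qIdx n i))^2) := by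
  have h : ∀ k, (fAux n α x i k)^2 = (α i / 2)^2 *
      ((if k = qIdx n i then (x (pIdx n i))^2 else 0)
        + (if k = pIdx n i then (x (qIdx n i))^2 else 0)) := by
    intro k
    simp only [fAux]
    split_ifs with a b
    · exact absurd (a ▸ b : qIdx n i = pIdx n i).symm (pIdx_ne_qIdx n i i)
    · ring1
    · ring1
    · ring1
  simp only [h, ← Finset.mul_sum, Finset.sum_add_distrib, Finset.sum_ite_eq',
    Finset.mem_univ, if_true]

lemma sum_k_p_fAux (n : ℕ) (α : Fin ((n+1)/2) → ℝ) (x p : Fin (n+1) → ℝ) (i : Fin ((n+1)/2)) :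
    ∑ k, p k * fAux n α x i k
      = (α i / 2) * (x (pIdx n i) * p (qIdx n i) - x (qIdx n i) * p (pIdx n i)) := by
  have h : ∀ k, p k * fAux n α x i k = (α i / 2) *
      ((if k = qIdx n i then x (pIdx n i) * p (qIdx n i) else 0)
        - (if k = pIdx n i then x (qIdx n i) * p (pIdx n i) else 0)) := by
    intro k
    simp only [fAux]
    split_ifs with a b
    · exact absurd (a ▸ b : qIdx n i = pIdx n i).symm (pIdx_ne_qIdx n i i)
    all_goals (subst_vars; ring1)
  simp only [h, ← Finset.mul_sum, Finset.sum_sub_distrib, Finset.sum_ite_eq',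
    Finset.mem_univ, if_true]

lemma main_expand (n : ℕ) (α : Fin ((n+1)/2) → ℝ) (x p : Fin (n+1) → ℝ) :
    ∑ k, (p k - ∑ i, (α i / 2) * ((if k = qIdx n i then x (pIdx n i) else 0)
        - (if k = pIdx n i then x (qIdx n i) else 0)))^2
      = (∑ k, (p k)^2)
        + (1/4) * ∑ i, (α i)^2 * ((x (pIdx n i))^2 + (x (qIdx n i))^2)
        + ∑ i, α i * (x (qIdx n i) * p (pIdx n i) - x (pIdx n i) * p (qIdx n i)) := by
  have h1 : ∀ k, (p k - ∑ i, (α i / 2) * ((if k = qIdx n i then x (pIdx n i) else 0)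
        - (if k = pIdx n i then x (qIdx n i) else 0)))^2
      = (p k)^2 - 2 * ∑ i, p k * fAux n α x i k + ∑ i, (fAux n α x i k)^2 := by
    intro k
    have : (∑ i, (α i / 2) * ((if k = qIdx n i then x (pIdx n i) else 0)
        - (if k = pIdx n i then x (qIdx n i) else 0))) = ∑ i, fAux n α x i k := rfl
    rw [this, ← sum_fAux_sq, ← Finset.mul_sum]
    ring1
  have hc1 : ∑ k, ∑ i, p k * fAux n α x i k = ∑ i, ∑ k, p k * fAux n α x i k :=
    Finset.sum_comm
  have hc2 : (∑ k, ∑ i, (fAux n α x i k)^2) = ∑ i, ∑ k, (fAux n α x i k)^2 :=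
    Finset.sum_comm
  rw [Finset.sum_congr rfl fun k _ => h1 k, Finset.sum_add_distrib, Finset.sum_sub_distrib,
    ← Finset.mul_sum, hc1, hc2]
  simp only [sum_k_p_fAux, sum_k_fAux_sq, Finset.mul_sum]
  rw [Finset.sum_congr rfl (fun i (_ : i ∈ Finset.univ) =>
    (by ring1 : 2 * ((α i / 2) * (x (pIdx n i) * p (qIdx n i) - x (qIdx n i) * p (pIdx n i)))
      = -(α i * (x (qIdx n i) * p (pIdx n i) - x (pIdx n i) * p (qIdx n i))))),
    Finset.sum_congr rfl (fun i (_ : i ∈ Finset.univ) =>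
    (by ring1 : (α i / 2)^2 * ((x (pIdx n i))^2 + (x (qIdx n i))^2)
      = (1/4) * ((α i)^2 * ((x (pIdx n i))^2 + (x (qIdx n i))^2)))),
    Finset.sum_neg_distrib]
  ring1


/-- The perturbed Hamiltonian of the magnetic geodesic flow on `Sⁿ`
with magnetic form the restriction of `∑ αᵢ dX^{2i-1} ∧ dX^{2i}` equals
`H + (1/2)(α₁ M₁₂ + α₂ M₃₄ + … + α_m M_{2m-1,2m})`, where `H = K + U_A` is the
Hamiltonian of the degenerate Neumann system with potential
`U_A = (1/8) ∑ᵢ αᵢ² ((X^{2i-1})² + (X^{2i})²)`.  Here `H_pert(x,p) = ½|p - σ♯(x)|²`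
in the ambient realization of `T*Sⁿ` (with `σ` the restriction of
`∑ (αᵢ/2)(X^{2i-1} dX^{2i} - X^{2i} dX^{2i-1})` and `σ♯` its metric dual), `K = ½|p|²`
is the round kinetic energy, and `M_{2i-1,2i}` is the momentum function of the rotation
in the `(X^{2i-1}, X^{2i})`-plane. -/
theorem perturbed_hamiltonian_eq_neumann_plus_linear (n : ℕ) (α : Fin ((n+1)/2) → ℝ)
    (σs : (Fin (n+1) → ℝ) → (Fin (n+1) → ℝ))  -- the metric dual `σ♯`
    (hσs : ∀ x k, σs x k = ∑ i, (α i / 2) *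
      ((if k = qIdx n i then x (pIdx n i) else 0) - (if k = pIdx n i then x (qIdx n i) else 0)))
    (Hpert K UA : Phase (n+1) → ℝ)
    (hHpert : ∀ z, Hpert z = (1/2) * ∑ k, (z.2 k - σs z.1 k)^2)
    (hK : ∀ z, K z = (1/2) * ∑ k, (z.2 k)^2)
    (hUA : ∀ z, UA z = (1/8) * ∑ i, (α i)^2 * ((z.1 (pIdx n i))^2 + (z.1 (qIdx n i))^2))
    (M : Fin ((n+1)/2) → Phase (n+1) → ℝ)  -- momentum of the rotation in the `i`-th plane
    (hM : ∀ i z, M i z = z.1 (qIdx n i) * z.2 (pIdx n i) - z.1 (pIdx n i) * z.2 (qIdx n i)) :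
    ∀ z ∈ TS (n+1), Hpert z = (K z + UA z) + (1/2) * ∑ i, α i * M i z := by
  intro z _hz
  simp only [hHpert, hK, hUA, hσs, hM, main_expand n α z.1 z.2]
  ring1
end
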